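/- arXiv:1803.01376 — 9 statements merged into one kernel-verified Lean document; each statement's English description precedes it below -/
import Mathlib

section
/- Let Λ be a real vector space and S : (ℕ → Λ) → Λ an ℝ-linear map satisfying the unit and associativity axioms of an algebra over the coperad ℝ[X]. If V is a linear subspace of Λ that is stable under ε (i.e. ε(V) ⊆ V) and such that ε : V → V is surjective (every v ∈ V is ε(w) for some w ∈ V), then V = 0. -/
/-!
Associativity applied to the family `a p q = if q = 1 then w p else 0` says that
`S (ε ∘ w)` equals `S` of the shifted sequence `(0, w 0, w 1, …)`. If `w` is a backward
`ε`-orbit, `ε (w (n + 1)) = w n`, then `ε ∘ w` is that shifted sequence plus `(ε (w 0), 0, 0, …)`,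
so the unit axiom forces `ε (w 0) = 0`. Surjectivity of `ε` on `V` provides a backward orbit
through every point of `V`, hence `ε` vanishes on `V`, and `V = ε V = 0`.
-/

theorem exists_backward_orbit {α : Type*} {f : α → α} {s : Set α}
    (hsurj : ∀ v ∈ s, ∃ w ∈ s, f w = v) {v : α} (hv : v ∈ s) :
    ∃ w : ℕ → α, w 0 = v ∧ ∀ n, f (w (n + 1)) = w n := by
  choose g hgs hg using hsurj
  let g' : s → s := fun x => ⟨g x x.2, hgs x x.2⟩
  refine ⟨fun n => (g'^[n] ⟨v, hv⟩ : α), rfl, fun n => ?_⟩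
  show f (g'^[n + 1] _ : α) = _
  rw [Function.iterate_succ_apply']
  exact hg _ _

section CoperadAlgebra

variable {R Λ : Type*} [Semiring R] [AddCommGroup Λ] [Module R Λ]
  {S : (ℕ → Λ) →ₗ[R] Λ} {ε : Λ → Λ}

theorem sum_antidiagonal_single_one (w : ℕ → Λ) (n : ℕ) :
    ∑ p ∈ Finset.range (n + 1), (if n - p = 1 then w p else 0) =
      if n = 0 then 0 else w (n - 1) := by
  cases n with
  | zero => simp
  | succ m =>
    rw [Finset.sum_eq_single m]
    · simp
    · intro p hp hpm
      have : m + 1 - p ≠ 1 := by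
        have := Finset.mem_range.mp hp
        omega
      simp [this]
    · simp

theorem map_comp_eps_eq_map_shift
    (hassoc : ∀ a : ℕ → ℕ → Λ,
      S (fun i => S (a i)) = S (fun n => ∑ p ∈ Finset.range (n + 1), a p (n - p)))
    (hε : ∀ x : Λ, ε x = S (fun n => if n = 1 then x else 0)) (w : ℕ → Λ) :
    S (fun n => ε (w n)) = S (fun n => if n = 0 then 0 else w (n - 1)) := by
  simpa only [hε, sum_antidiagonal_single_one] using
    hassoc fun p q => if q = 1 then w p else 0

theorem eps_eq_zero_of_backward_orbit
    (hunit : ∀ a : Λ, S (fun n => if n = 0 then a else 0) = a)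
    (hassoc : ∀ a : ℕ → ℕ → Λ,
      S (fun i => S (a i)) = S (fun n => ∑ p ∈ Finset.range (n + 1), a p (n - p)))
    (hε : ∀ x : Λ, ε x = S (fun n => if n = 1 then x else 0))
    {w : ℕ → Λ} (hw : ∀ n, ε (w (n + 1)) = w n) :
    ε (w 0) = 0 := by
  have hsplit : (fun n => ε (w n)) =
      (fun n => if n = 0 then 0 else w (n - 1)) + fun n => if n = 0 then ε (w 0) else 0 := by
    funext n
    cases n with
    | zero => simp
    | succ m => simp [hw m]
  have := map_comp_eps_eq_map_shift hassoc hε w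
  rw [hsplit, map_add, hunit] at this
  exact add_eq_left.mp this

end CoperadAlgebra

theorem eps_surjective_on_stable_submodule_implies_trivial_general
    (Λ : Type*) [AddCommGroup Λ] [Module ℝ Λ]
    (S : (ℕ → Λ) →ₗ[ℝ] Λ)
    (hunit : ∀ a : Λ, S (fun n => if n = 0 then a else 0) = a)
    (hassoc : ∀ a : ℕ → ℕ → Λ,
      S (fun i => S (a i)) = S (fun n => ∑ p ∈ Finset.range (n + 1), a p (n - p)))
    (ε : Λ → Λ) (hε : ∀ x : Λ, ε x = S (fun n => if n = 1 then x else 0))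
    (V : Submodule ℝ Λ)
    (hsurj : ∀ v ∈ V, ∃ w ∈ V, ε w = v) :
    V = ⊥ := by
  refine (Submodule.eq_bot_iff V).mpr fun v hv => ?_
  obtain ⟨u, hu, rfl⟩ := hsurj v hv
  obtain ⟨w, rfl, hw⟩ := exists_backward_orbit hsurj hu
  exact eps_eq_zero_of_backward_orbit hunit hassoc hε hw

/-- If `(Λ, S)` is an algebra over the coperad `ℝ[X]`
(`S` is ℝ-linear and satisfies the unit and associativity axioms),
`ε a = S (0, a, 0, 0, …)`, and `V` is a subspace of `Λ` stable under `ε`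
on which `ε` is surjective, then `V = 0`. -/
theorem eps_surjective_on_stable_submodule_implies_trivial
    (Λ : Type*) [AddCommGroup Λ] [Module ℝ Λ]
    (S : (ℕ → Λ) →ₗ[ℝ] Λ)
    (hunit : ∀ a : Λ, S (fun n => if n = 0 then a else 0) = a)
    (hassoc : ∀ a : ℕ → ℕ → Λ,
      S (fun i => S (a i)) = S (fun n => ∑ p ∈ Finset.range (n + 1), a p (n - p)))
    (ε : Λ → Λ) (hε : ∀ x : Λ, ε x = S (fun n => if n = 1 then x else 0))
    (V : Submodule ℝ Λ)
    (hstab : ∀ v ∈ V, ε v ∈ V)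
    (hsurj : ∀ v ∈ V, ∃ w ∈ V, ε w = v) :
    V = ⊥ :=
  eps_surjective_on_stable_submodule_implies_trivial_general Λ S hunit hassoc ε hε V hsurj
end

section
/- Let Λ be a real vector space and S : (ℕ → Λ) → Λ an ℝ-linear map satisfying the unit and associativity axioms of an algebra over the coperad ℝ[X]. If x : ℕ → Λ is a sequence with x_i = ε(x_{i+1}) for every i ∈ ℕ, then x_0 = 0. -/
/-! Associativity applied to the family `a i j = (if j = 1 then x (i + 1) else 0)` shows that
`S` does not see the head of an `ε`-divisible sequence: `S x = S (0, x 1, x 2, …)`. By linearity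
`S (x 0, 0, 0, …) = 0`, and the unit axiom turns this into `x 0 = 0`. -/

lemma sum_range_ite_sub_eq_one {M : Type*} [AddCommMonoid M] (y : ℕ → M) (n : ℕ) :
    ∑ p ∈ Finset.range (n + 1), (if n - p = 1 then y p else 0)
      = if n = 0 then 0 else y (n - 1) := by
  rcases n with _ | m
  · simp
  · rw [Finset.sum_eq_single m]
    · simp [show m + 1 - m = 1 by omega]
    · intro p hp hpm
      have : m + 1 - p ≠ 1 := by
        have := Finset.mem_range.mp hp
        omega
      simp [this]
    · simp

section

variable {R M : Type*} [Semiring R] [AddCommMonoid M] [Module R M] (S : (ℕ → M) →ₗ[R] M)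

lemma map_map_single_one_eq_map_shift
    (hassoc : ∀ a : ℕ → ℕ → M,
      S (fun i => S (a i)) = S (fun n => ∑ p ∈ Finset.range (n + 1), a p (n - p)))
    (y : ℕ → M) :
    S (fun i => S (fun j => if j = 1 then y i else 0))
      = S (fun n => if n = 0 then 0 else y (n - 1)) := by
  rw [hassoc]
  simp only [sum_range_ite_sub_eq_one]

lemma map_eq_head_add_map_tail (hunit : ∀ a : M, S (fun n => if n = 0 then a else 0) = a)
    (x : ℕ → M) :
    S x = x 0 + S (fun n => if n = 0 then 0 else x n) := by
  rw [← hunit (x 0), ← map_add]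
  congr 1
  funext n
  rcases n with _ | n <;> simp

end

/-- If `(Λ, S)` is an algebra over the coperad `ℝ[X]`
(`S` is ℝ-linear and satisfies the unit and associativity axioms),
`ε a = S (0, a, 0, 0, …)`, and `x : ℕ → Λ` is a sequence with
`x i = ε (x (i+1))` for all `i`, then `x 0 = 0`. -/
theorem eps_divisible_sequence_head_eq_zero
    (Λ : Type*) [AddCommGroup Λ] [Module ℝ Λ]
    (S : (ℕ → Λ) →ₗ[ℝ] Λ)
    (hunit : ∀ a : Λ, S (fun n => if n = 0 then a else 0) = a)
    (hassoc : ∀ a : ℕ → ℕ → Λ,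
      S (fun i => S (a i)) = S (fun n => ∑ p ∈ Finset.range (n + 1), a p (n - p)))
    (ε : Λ → Λ) (hε : ∀ x : Λ, ε x = S (fun n => if n = 1 then x else 0))
    (x : ℕ → Λ) (hx : ∀ i : ℕ, x i = ε (x (i + 1))) :
    x 0 = 0 := by
  have hx_eps : x = fun i => S (fun j => if j = 1 then x (i + 1) else 0) := by
    funext i
    rw [hx, hε]
  have htail : (fun n => if n = 0 then 0 else x (n - 1 + 1)) = fun n => if n = 0 then 0 else x n := by
    funext n
    rcases n with _ | n <;> simp
  have hS : S x = S (fun n => if n = 0 then 0 else x n) := by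
    conv_lhs => rw [hx_eps]
    rw [map_map_single_one_eq_map_shift S hassoc (fun i => x (i + 1)), htail]
  simpa [hS] using map_eq_head_add_map_tail S hunit x
end

section
/- Let Λ be a real vector space and S : (ℕ → Λ) → Λ an ℝ-linear map satisfying the unit and associativity axioms of an algebra over the coperad ℝ[X]. Then the only eigenvalue of ε is zero: for every nonzero scalar c ∈ ℝ and every x ∈ Λ, if ε(x) = c • x then x = 0. -/
/-- If `(Λ, S)` is an algebra over the coperad `ℝ[X]`
(`S` is ℝ-linear and satisfies the unit and associativity axioms) and
`ε a = S (0, a, 0, 0, …)`, then the only eigenvalue of `ε` is zero: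
for every nonzero scalar `c` and every `x`, `ε x = c • x` implies `x = 0`. -/
theorem eps_has_no_nonzero_eigenvalue
    (Λ : Type*) [AddCommGroup Λ] [Module ℝ Λ]
    (S : (ℕ → Λ) →ₗ[ℝ] Λ)
    (hunit : ∀ a : Λ, S (fun n => if n = 0 then a else 0) = a)
    (hassoc : ∀ a : ℕ → ℕ → Λ,
      S (fun i => S (a i)) = S (fun n => ∑ p ∈ Finset.range (n + 1), a p (n - p)))
    (ε : Λ → Λ) (hε : ∀ x : Λ, ε x = S (fun n => if n = 1 then x else 0))
    (c : ℝ) (hc : c ≠ 0) (x : Λ) (hx : ε x = c • x) :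
    x = 0 := by
  set u : ℕ → Λ := fun n => (c⁻¹) ^ n • x with hu
  have hSx : S (fun n => if n = 1 then x else 0) = c • x := by
    rw [← hε, hx]
  have key := hassoc (fun i j => if j = 1 then u i else 0)
  have h1 : (fun i => S (fun j => if j = 1 then u i else 0)) = fun i => c • u i := by
    funext i
    have : (fun j => if j = 1 then u i else 0)
        = (c⁻¹) ^ i • (fun j => if j = 1 then x else 0) := by
      funext j
      by_cases hj : j = 1 <;> simp [hj, hu]
    rw [this, map_smul, hSx, hu]
    simp [smul_smul, mul_comm]
  have h2 : (fun n => ∑ p ∈ Finset.range (n + 1),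
        (fun i j => if j = 1 then u i else 0) p (n - p))
      = fun n => if n = 0 then (0 : Λ) else u (n - 1) := by
    funext n
    cases n with
    | zero => simp
    | succ m =>
      have : ∀ p ∈ Finset.range (m + 2),
          (if m + 1 - p = 1 then u p else 0) = (if p = m then u p else 0) := by
        intro p hp
        simp only [Finset.mem_range] at hp
        by_cases h : p = m
        · subst h; simp
        · have : m + 1 - p ≠ 1 := by omega
          simp [h, this]
      simp only [Finset.sum_congr rfl this, Finset.sum_ite_eq' (Finset.range (m + 2)) m u]
      simp
  have h3 : (fun n => if n = 0 then (0 : Λ) else u (n - 1))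
      = c • u - (fun n => if n = 0 then c • x else 0) := by
    funext n
    cases n with
    | zero => simp [hu]
    | succ m =>
      have hcc : c * (c ^ (m + 1))⁻¹ = (c ^ m)⁻¹ := by
        rw [pow_succ]
        field_simp
      simp only [hu, Nat.succ_ne_zero, if_false, Nat.add_sub_cancel, Pi.sub_apply,
        Pi.smul_apply, smul_smul, inv_pow]
      rw [hcc]
      simp
  rw [h1, h2, h3, map_sub, map_smul, hunit] at key
  have hcx : c • x = 0 := by
    have := key
    have : S (fun i => c • u i) = S (c • u) := rfl
    rw [this, map_smul] at key
    linear_combination (norm := abel) key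
  rcases smul_eq_zero.mp hcx with h | h
  · exact absurd h hc
  · exact h
end

section
/- Let Λ be a real vector space and S : (ℕ → Λ) → Λ an ℝ-linear map satisfying the unit and associativity axioms of an algebra over the coperad ℝ[X]. If Λ is finite dimensional, then ε is nilpotent: there exists n ∈ ℕ with ε^n = 0. -/
/-!
Write `ε` for the endomorphism `a ↦ S (0, a, 0, …)`. Applying associativity to the family
`a p q = δ_{q,1} x (p + 1)` shows that whenever `ε (x (n + 1)) = x n` for all `n`, one has
`S x = S x - x 0`, so `x 0 = 0`: no nonzero vector has an infinite chain of `ε`-preimages.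
In finite dimension the ranges of `ε ^ n` stabilize, `ε` maps the stable range onto itself, so
every vector of that range has such a chain and the stable range is `0`.
-/

open Finset

theorem sum_range_succ_ite_sub_eq_one {M : Type*} [AddCommMonoid M] (x : ℕ → M) (n : ℕ) :
    ∑ p ∈ range (n + 1), (if n - p = 1 then x (p + 1) else 0) = if n = 0 then 0 else x n := by
  rcases n with _ | m
  · simp
  · rw [sum_eq_single_of_mem m (by simp) fun p hp hpm => if_neg (by grind)]
    simp

theorem Module.End.isNilpotent_of_backward_orbit_eq_zero {R M : Type*} [Semiring R]
    [AddCommMonoid M] [Module R M] [IsArtinian R M] (f : Module.End R M)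
    (hf : ∀ x : ℕ → M, (∀ n, f (x (n + 1)) = x n) → x 0 = 0) : IsNilpotent f := by
  obtain ⟨k, hk⟩ := IsArtinian.monotone_stabilizes f.iterateRange
  -- On the stable range `V = range (f ^ k)` the map `f` is onto, so every `v ∈ V` starts a chain.
  have hsurj : ∀ v : LinearMap.range (f ^ k), ∃ u : LinearMap.range (f ^ k), f u = v := by
    rintro ⟨v, hv⟩
    obtain ⟨w, rfl⟩ : v ∈ LinearMap.range (f ^ (k + 1)) := by
      rwa [← LinearMap.iterateRange_coe, ← hk (k + 1) k.le_succ]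
    exact ⟨⟨(f ^ k) w, LinearMap.mem_range_self _ w⟩, by simp [pow_succ']⟩
  choose g hg using hsurj
  refine ⟨k, LinearMap.ext fun y => ?_⟩
  have := hf (fun n => (g^[n] ⟨(f ^ k) y, LinearMap.mem_range_self _ y⟩ : M))
    fun n => by rw [Function.iterate_succ_apply', hg]
  simpa using this

section CoperadAlgebra

variable {R M : Type*} [Semiring R] [AddCommGroup M] [Module R M]

def eps (S : (ℕ → M) →ₗ[R] M) : Module.End R M :=
  S ∘ₗ LinearMap.single R (fun _ => M) 1

theorem eps_apply (S : (ℕ → M) →ₗ[R] M) (a : M) :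
    eps S a = S (fun n => if n = 1 then a else 0) := by
  simp only [eps, LinearMap.comp_apply, LinearMap.single_apply]
  congr 1
  funext n
  exact Pi.single_apply ..

theorem eps_backward_orbit_zero_eq_zero (S : (ℕ → M) →ₗ[R] M)
    (hunit : ∀ a : M, S (fun n => if n = 0 then a else 0) = a)
    (hassoc : ∀ a : ℕ → ℕ → M,
      S (fun i => S (a i)) = S (fun n => ∑ p ∈ range (n + 1), a p (n - p)))
    (x : ℕ → M) (hx : ∀ n, eps S (x (n + 1)) = x n) : x 0 = 0 := by
  have h := hassoc fun p q => if q = 1 then x (p + 1) else 0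
  simp only [← eps_apply, hx, sum_range_succ_ite_sub_eq_one] at h
  have hshift : (fun n => if n = 0 then (0 : M) else x n) =
      x - fun n => if n = 0 then x 0 else 0 := by
    funext n
    rcases n with _ | n <;> simp
  rw [hshift, map_sub, hunit] at h
  exact sub_eq_self.mp h.symm

end CoperadAlgebra

/-- If `(Λ, S)` is an algebra over the coperad `ℝ[X]`
(`S` is ℝ-linear and satisfies the unit and associativity axioms),
`ε a = S (0, a, 0, 0, …)`, and `Λ` is finite dimensional, then `ε` is
nilpotent: some iterate of `ε` is the zero map. -/
theorem eps_nilpotent_of_finiteDimensional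
    (Λ : Type*) [AddCommGroup Λ] [Module ℝ Λ] [FiniteDimensional ℝ Λ]
    (S : (ℕ → Λ) →ₗ[ℝ] Λ)
    (hunit : ∀ a : Λ, S (fun n => if n = 0 then a else 0) = a)
    (hassoc : ∀ a : ℕ → ℕ → Λ,
      S (fun i => S (a i)) = S (fun n => ∑ p ∈ Finset.range (n + 1), a p (n - p)))
    (ε : Λ → Λ) (hε : ∀ x : Λ, ε x = S (fun n => if n = 1 then x else 0)) :
    ∃ n : ℕ, ∀ x : Λ, ε^[n] x = 0 := by
  have hε_eq : ε = eps S := funext fun x => (hε x).trans (eps_apply S x).symm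
  obtain ⟨n, hn⟩ := (eps S).isNilpotent_of_backward_orbit_eq_zero
    (eps_backward_orbit_zero_eq_zero S hunit hassoc)
  refine ⟨n, fun x => ?_⟩
  rw [hε_eq, ← Module.End.pow_apply, hn, LinearMap.zero_apply]
end

section
/- Let Λ be a real vector space and S : (ℕ → Λ) → Λ an ℝ-linear map satisfying the unit and associativity axioms of an algebra over the coperad ℝ[X]. If a : ℕ → Λ is eventually zero, say a_n = 0 for all n ≥ N, then S(a) = ∑_{n < N} ε^n(a_n). -/
/-!
Write `a` as the finite sum of the sequences `Pi.single n (a n)`. The associativity axiom, applied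
to the family `Pi.single 1 (Pi.single n x)` (whose antidiagonal sums form `Pi.single (n + 1) x`),
gives `S (Pi.single (n + 1) x) = ε (S (Pi.single n x))`; with the unit axiom this yields
`S (Pi.single n x) = ε^[n] x`, and additivity of `S` finishes the proof.
-/

open Finset

section

variable {M : Type*} [AddCommMonoid M]

theorem eq_sum_range_single_of_forall_ge_eq_zero {a : ℕ → M} {N : ℕ}
    (ha : ∀ n, N ≤ n → a n = 0) : a = ∑ n ∈ range N, Pi.single n (a n) := by
  ext m
  simp only [Finset.sum_apply, sum_pi_single, mem_range]
  split_ifs with hm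
  · rfl
  · exact ha m (not_lt.mp hm)

theorem sum_range_single_single_sub (i j n : ℕ) (x : M) :
    ∑ p ∈ range (n + 1), Pi.single (M := fun _ => ℕ → M) i (Pi.single j x) p (n - p) =
      (Pi.single (i + j) x : ℕ → M) n := by
  simp only [Pi.single_apply, ite_apply, Pi.zero_apply, sum_ite_eq', mem_range]
  split_ifs <;> first | rfl | omega

end

section

variable {Λ F : Type*} [AddCommMonoid Λ] [FunLike F (ℕ → Λ) Λ] [AddMonoidHomClass F (ℕ → Λ) Λ]
  {S : F}

theorem map_single_succ_eq_map_single_one_map_single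
    (hassoc : ∀ a : ℕ → ℕ → Λ,
      S (fun i => S (a i)) = S (fun n => ∑ p ∈ range (n + 1), a p (n - p)))
    (n : ℕ) (x : Λ) : S (Pi.single (n + 1) x) = S (Pi.single 1 (S (Pi.single n x))) := by
  have h := hassoc (Pi.single 1 (Pi.single n x))
  simp only [sum_range_single_single_sub, add_comm 1 n] at h
  rw [← h, Pi.single_op (fun _ => S) (fun _ => map_zero S)]

theorem map_single_eq_iterate
    (hunit : ∀ x : Λ, S (Pi.single 0 x) = x)
    (hassoc : ∀ a : ℕ → ℕ → Λ,
      S (fun i => S (a i)) = S (fun n => ∑ p ∈ range (n + 1), a p (n - p)))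
    (n : ℕ) (x : Λ) : S (Pi.single n x) = (fun y => S (Pi.single 1 y))^[n] x := by
  induction n with
  | zero => exact hunit x
  | succ n ih =>
    rw [map_single_succ_eq_map_single_one_map_single hassoc, ih,
      Function.iterate_succ_apply']

end

/-- If `(Λ, S)` is an algebra over the coperad `ℝ[X]`
(`S` is ℝ-linear and satisfies the unit and associativity axioms),
`ε a = S (0, a, 0, 0, …)`, and `a : ℕ → Λ` vanishes from index `N` on,
then `S a = ∑_{n < N} ε^n (a n)`. -/
theorem S_eventually_zero_eq_sum_iterates
    (Λ : Type*) [AddCommGroup Λ] [Module ℝ Λ]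
    (S : (ℕ → Λ) →ₗ[ℝ] Λ)
    (hunit : ∀ a : Λ, S (fun n => if n = 0 then a else 0) = a)
    (hassoc : ∀ a : ℕ → ℕ → Λ,
      S (fun i => S (a i)) = S (fun n => ∑ p ∈ Finset.range (n + 1), a p (n - p)))
    (ε : Λ → Λ) (hε : ∀ x : Λ, ε x = S (fun n => if n = 1 then x else 0))
    (a : ℕ → Λ) (N : ℕ) (ha : ∀ n : ℕ, N ≤ n → a n = 0) :
    S a = ∑ n ∈ Finset.range N, ε^[n] (a n) := by
  have single_eq_ite (i : ℕ) (x : Λ) : Pi.single i x = fun n => if n = i then x else 0 :=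
    funext (Pi.single_apply i x)
  have hunit_single (x : Λ) : S (Pi.single 0 x) = x := by
    rw [single_eq_ite]
    exact hunit x
  have hε_single : ε = fun x => S (Pi.single 1 x) := by
    funext x
    rw [hε, single_eq_ite]
  calc S a = ∑ n ∈ range N, S (Pi.single n (a n)) := by
        rw [← map_sum, ← eq_sum_range_single_of_forall_ge_eq_zero ha]
    _ = ∑ n ∈ range N, ε^[n] (a n) := by
        rw [hε_single]
        exact sum_congr rfl fun n _ => map_single_eq_iterate hunit_single hassoc n (a n)
end

section
/- There exist a real vector space Λ and an ℝ-linear map S : (ℕ → Λ) → Λ satisfying the unit and associativity axioms of an algebra over the coperad ℝ[X] such that ⋂_{n∈ℕ} range(ε^n) ≠ {0}, where ε(a) = S(0, a, 0, 0, …). (In other words, not every algebra over a locally conilpotent coperad is complete for its canonical topology, whose n-th ideal is the image of ε^n.) -/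
/- Construction: let `MM = ℕ → ℕ → ℝ` model `V[[x]]` where `V` has basis
`b₀ = c, b₁, b₂, …` (first index = power of `x`, second = basis index of `V`),
with the convolution summation `S0 a k n = ∑_{i ≤ k} a i (k-i) n`
(i.e. `S0 a = ∑ xⁱ · a i`).  We quotient by the `S0`-stable subspace `KK`
"strongly generated" by the relations `xⁿ·bₙ - c`; in the quotient,
`ε = (x·)` satisfies `εⁿ [bₙ] = [c]` for all `n` while `[c] ≠ 0`. -/

noncomputable section PstarAux

abbrev MM : Type := ℕ → ℕ → ℝ

def S0 : (ℕ → MM) →ₗ[ℝ] MM where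
  toFun a := fun k n => ∑ i ∈ Finset.range (k+1), a i (k - i) n
  map_add' a b := by funext k n; simp [Finset.sum_add_distrib]
  map_smul' c a := by funext k n; simp [Finset.mul_sum]

lemma S0_apply (a : ℕ → MM) (k n : ℕ) :
    S0 a k n = ∑ i ∈ Finset.range (k+1), a i (k - i) n := rfl

def KK : Submodule ℝ MM where
  carrier := {g | (∀ k n, k < n → g k n = 0) ∧
    ∀ m, ∃ N, ∀ M ≥ N, g m 0 + ∑ j ∈ Finset.Icc 1 M, g (m + j) j = 0}
  add_mem' := by
    rintro g f ⟨hg1, hg2⟩ ⟨hf1, hf2⟩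
    refine ⟨fun k n hk => by simp [hg1 k n hk, hf1 k n hk], fun m => ?_⟩
    obtain ⟨N1, h1⟩ := hg2 m
    obtain ⟨N2, h2⟩ := hf2 m
    refine ⟨max N1 N2, fun M hM => ?_⟩
    have e1 := h1 M (le_trans (le_max_left _ _) hM)
    have e2 := h2 M (le_trans (le_max_right _ _) hM)
    simp only [Pi.add_apply, Finset.sum_add_distrib]
    linarith
  zero_mem' := by
    refine ⟨fun k n _ => rfl, fun m => ⟨0, fun M _ => by simp⟩⟩
  smul_mem' := by
    rintro c g ⟨hg1, hg2⟩
    refine ⟨fun k n hk => by simp [hg1 k n hk], fun m => ?_⟩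
    obtain ⟨N, h⟩ := hg2 m
    refine ⟨N, fun M hM => ?_⟩
    have := h M hM
    simp only [Pi.smul_apply, smul_eq_mul, ← Finset.mul_sum]
    rw [← mul_add, this, mul_zero]

lemma KK_mem_iff (g : MM) : g ∈ KK ↔ (∀ k n, k < n → g k n = 0) ∧
    ∀ m, ∃ N, ∀ M ≥ N, g m 0 + ∑ j ∈ Finset.Icc 1 M, g (m + j) j = 0 :=
  Iff.rfl

lemma S0_mem (a : ℕ → MM) (h : ∀ i, a i ∈ KK) : S0 a ∈ KK := by
  constructor
  · intro k n hk
    rw [S0_apply]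
    refine Finset.sum_eq_zero fun i _ => (h i).1 _ _ (lt_of_le_of_lt (Nat.sub_le k i) hk)
  · intro m
    have hch : ∀ i : ℕ, ∃ N, ∀ M ≥ N,
        a i (m - i) 0 + ∑ j ∈ Finset.Icc 1 M, a i ((m - i) + j) j = 0 :=
      fun i => (h i).2 (m - i)
    choose Nf hNf using hch
    refine ⟨(Finset.range (m+1)).sup Nf, fun M hM => ?_⟩
    simp only [S0_apply]
    have key : ∀ j ∈ Finset.Icc 1 M,
        ∑ i ∈ Finset.range (m + j + 1), a i (m + j - i) j
          = ∑ i ∈ Finset.range (m + 1), a i ((m - i) + j) j := by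
      intro j hj
      have hj1 : 1 ≤ j := (Finset.mem_Icc.mp hj).1
      have hsub : Finset.range (m + 1) ⊆ Finset.range (m + j + 1) :=
        Finset.range_subset_range.mpr (by omega)
      have hz : ∀ i ∈ Finset.range (m + j + 1), i ∉ Finset.range (m + 1) →
          a i (m + j - i) j = 0 := by
        intro i hi hni
        have h1 : i ≤ m + j := Nat.lt_succ_iff.mp (Finset.mem_range.mp hi)
        have h2 : m + 1 ≤ i := by simpa using hni
        exact (h i).1 _ _ (by omega)
      rw [← Finset.sum_subset hsub hz]
      apply Finset.sum_congr rfl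
      intro i hi
      have : i ≤ m := Nat.lt_succ_iff.mp (Finset.mem_range.mp hi)
      congr 1
      omega
    calc (∑ i ∈ Finset.range (m+1), a i (m - i) 0)
          + ∑ j ∈ Finset.Icc 1 M, ∑ i ∈ Finset.range (m + j + 1), a i (m + j - i) j
        = (∑ i ∈ Finset.range (m+1), a i (m - i) 0)
          + ∑ j ∈ Finset.Icc 1 M, ∑ i ∈ Finset.range (m + 1), a i ((m - i) + j) j := by
          rw [Finset.sum_congr rfl key]
      _ = ∑ i ∈ Finset.range (m+1),
            (a i (m - i) 0 + ∑ j ∈ Finset.Icc 1 M, a i ((m - i) + j) j) := by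
          rw [Finset.sum_comm (s := Finset.Icc 1 M)]
          rw [Finset.sum_add_distrib]
      _ = 0 := by
          refine Finset.sum_eq_zero fun i hi => ?_
          exact hNf i M (le_trans (Finset.le_sup hi) hM)

lemma S0_unit (v : MM) : S0 (fun n => if n = 0 then v else 0) = v := by
  funext k n
  rw [S0_apply]
  rw [Finset.sum_eq_single 0]
  · simp
  · intro i _ hi
    simp [hi]
  · simp

/-- shift: multiplication by `x`. -/
def shiftM (g : MM) : MM := fun k n => if k = 0 then 0 else g (k - 1) n

lemma S0_eps (g : MM) : S0 (fun m => if m = 1 then g else 0) = shiftM g := by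
  funext k n
  rw [S0_apply, shiftM]
  rcases Nat.eq_zero_or_pos k with hk | hk
  · subst hk; simp
  · rw [Finset.sum_eq_single 1]
    · simp [Nat.pos_iff_ne_zero.mp hk]
    · intro i _ hi; simp [hi]
    · intro h
      exact absurd (Finset.mem_range.mpr (by omega)) h

lemma S0_assoc (a : ℕ → ℕ → MM) :
    S0 (fun i => S0 (a i)) = S0 (fun m => ∑ p ∈ Finset.range (m + 1), a p (m - p)) := by
  funext k n
  rw [S0_apply, S0_apply]
  have L : ∑ i ∈ Finset.range (k+1), S0 (a i) (k - i) n
      = ∑ i ∈ Finset.range (k+1), ∑ j ∈ Finset.range (k - i + 1), a i j (k - i - j) n := by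
    apply Finset.sum_congr rfl
    intro i _
    rw [S0_apply]
  have R : ∑ m ∈ Finset.range (k+1),
        (∑ p ∈ Finset.range (m + 1), a p (m - p)) (k - m) n
      = ∑ m ∈ Finset.range (k+1), ∑ p ∈ Finset.range (m + 1), a p (m - p) (k - m) n := by
    apply Finset.sum_congr rfl
    intro m _
    simp [Finset.sum_apply]
  rw [L, R]
  rw [Finset.sum_sigma', Finset.sum_sigma']
  apply Finset.sum_nbij' (fun x => ⟨x.1 + x.2, x.1⟩) (fun x => ⟨x.2, x.1 - x.2⟩)
  · rintro ⟨i, j⟩ h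
    simp only [Finset.mem_sigma, Finset.mem_range] at h ⊢
    omega
  · rintro ⟨m, p⟩ h
    simp only [Finset.mem_sigma, Finset.mem_range] at h ⊢
    omega
  · rintro ⟨i, j⟩ h
    simp only [Finset.mem_sigma, Finset.mem_range] at h
    simp only [Sigma.mk.inj_iff]
    exact ⟨trivial, heq_of_eq (by omega)⟩
  · rintro ⟨m, p⟩ h
    simp only [Finset.mem_sigma, Finset.mem_range] at h
    simp only [Sigma.mk.inj_iff]
    exact ⟨by omega, HEq.rfl⟩
  · rintro ⟨i, j⟩ h
    simp only [Finset.mem_sigma, Finset.mem_range] at h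
    have h1 : i + j - i = j := by omega
    have h2 : k - (i + j) = k - i - j := by omega
    rw [h1, h2]

/-- the basis element `x^i ⊗ b_n` (with `b_0 = c`). -/
def eM (i n : ℕ) : MM := fun k j => if k = i ∧ j = n then 1 else 0

lemma shiftM_eM (i n : ℕ) : shiftM (eM i n) = eM (i + 1) n := by
  funext k j
  simp only [shiftM, eM]
  rcases Nat.eq_zero_or_pos k with hk | hk
  · subst hk; simp
  · have : k ≠ 0 := Nat.pos_iff_ne_zero.mp hk
    simp only [this, if_false]
    by_cases h : k - 1 = i ∧ j = n
    · have : k = i + 1 ∧ j = n := by omega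
      simp [h, this]
    · have h2 : ¬ (k = i + 1 ∧ j = n) := by omega
      simp [h, h2]

lemma rel_mem (n : ℕ) : eM n n - eM 0 0 ∈ KK := by
  rcases Nat.eq_zero_or_pos n with hn | hn
  · subst hn; simp
  rw [KK_mem_iff]
  constructor
  · intro k j hk
    simp only [Pi.sub_apply, eM]
    rw [if_neg (by omega : ¬(k = n ∧ j = n)), if_neg (by omega : ¬(k = 0 ∧ j = 0))]
    norm_num
  · intro m
    refine ⟨n, fun M hM => ?_⟩
    rcases Nat.eq_zero_or_pos m with hm | hm
    · subst hm
      simp only [Pi.sub_apply, eM]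
      rw [Finset.sum_eq_single n]
      · rw [if_neg (by omega : ¬((0:ℕ) = n ∧ (0:ℕ) = n)),
          if_pos (by omega : 0 + n = n ∧ n = n),
          if_neg (by omega : ¬(0 + n = 0 ∧ n = 0))]
        norm_num
      · intro j hj hjn
        have hj1 := (Finset.mem_Icc.mp hj).1
        rw [if_neg (by omega : ¬(0 + j = n ∧ j = n)),
          if_neg (by omega : ¬(0 + j = 0 ∧ j = 0))]
        norm_num
      · intro h; exact absurd (Finset.mem_Icc.mpr ⟨hn, hM⟩) h
    · simp only [Pi.sub_apply, eM]
      rw [Finset.sum_eq_zero]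
      · rw [if_neg (by omega : ¬(m = n ∧ (0:ℕ) = n))]
        simp [Nat.pos_iff_ne_zero.mp hm]
      · intro j hj
        have hj1 := (Finset.mem_Icc.mp hj).1
        rw [if_neg (by omega : ¬(m + j = n ∧ j = n)),
          if_neg (by omega : ¬(m + j = 0 ∧ j = 0))]
        norm_num

lemma c_not_mem : eM 0 0 ∉ KK := by
  rw [KK_mem_iff]
  rintro ⟨-, h2⟩
  obtain ⟨N, hN⟩ := h2 0
  have h := hN N le_rfl
  rw [Finset.sum_eq_zero] at h
  · simp [eM] at h
  · intro j hj
    have hj1 := (Finset.mem_Icc.mp hj).1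
    simp only [eM]
    rw [if_neg (by omega : ¬(0 + j = 0 ∧ j = 0))]

abbrev Lam : Type := MM ⧸ KK

abbrev qmk : MM →ₗ[ℝ] Lam := KK.mkQ

lemma qmk_out (x : Lam) : qmk x.out = x :=
  Quotient.out_eq' x

lemma qmk_S0_congr (a b : ℕ → MM) (h : ∀ n, qmk (a n) = qmk (b n)) :
    qmk (S0 a) = qmk (S0 b) := by
  rw [← sub_eq_zero, ← map_sub, ← map_sub, Submodule.mkQ_apply,
    Submodule.Quotient.mk_eq_zero]
  exact S0_mem _ fun n => by
    have := h n
    rw [← sub_eq_zero, ← map_sub, Submodule.mkQ_apply, Submodule.Quotient.mk_eq_zero] at this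
    simpa using this

def Sbar : (ℕ → Lam) →ₗ[ℝ] Lam where
  toFun f := qmk (S0 (fun n => (f n).out))
  map_add' f g := by
    have := qmk_S0_congr (fun n => ((f + g) n).out)
      (fun n => (f n).out + (g n).out)
      (fun n => by rw [map_add]; simp only [qmk_out]; rfl)
    rw [this, show (fun n => (f n).out + (g n).out)
      = (fun n => (f n).out) + (fun n => (g n).out) from rfl, map_add, map_add]
  map_smul' c f := by
    have := qmk_S0_congr (fun n => ((c • f) n).out)
      (fun n => c • (f n).out)
      (fun n => by rw [map_smul]; simp only [qmk_out]; rfl)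
    rw [this, show (fun n => c • (f n).out)
      = c • (fun n => (f n).out) from rfl, map_smul, map_smul, RingHom.id_apply]

lemma Sbar_mk (a : ℕ → MM) : Sbar (fun n => qmk (a n)) = qmk (S0 a) :=
  qmk_S0_congr _ _ fun _ => qmk_out _

end PstarAux

/-- There exists an algebra `(Λ, S)` over the coperad `ℝ[X]`
(`S` is ℝ-linear and satisfies the unit and associativity axioms) such that,
with `ε a = S (0, a, 0, 0, …)`, the intersection `⋂ₙ range (ε^n)` is not
reduced to `{0}`: not every algebra over a locally conilpotent coperad is
complete for its canonical topology. -/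
theorem exists_noncomplete_algebra_over_RX :
    ∃ (Λ : Type) (_ : AddCommGroup Λ) (_ : Module ℝ Λ)
      (S : (ℕ → Λ) →ₗ[ℝ] Λ),
      (∀ a : Λ, S (fun n => if n = 0 then a else 0) = a) ∧
      (∀ a : ℕ → ℕ → Λ,
        S (fun i => S (a i)) = S (fun n => ∑ p ∈ Finset.range (n + 1), a p (n - p))) ∧
      (⋂ n : ℕ, Set.range ((fun x : Λ => S (fun m => if m = 1 then x else 0))^[n]))
        ≠ ({0} : Set Λ) := by
  refine ⟨Lam, inferInstance, inferInstance, Sbar, ?_, ?_, ?_⟩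
  · -- unit axiom
    intro x
    have h1 : Sbar (fun n => if n = 0 then x else 0)
        = qmk (S0 (fun n => if n = 0 then x.out else (0 : MM))) := by
      have := Sbar_mk (fun n => if n = 0 then x.out else (0 : MM))
      rw [← this]
      congr 1
      funext n
      by_cases hn : n = 0
      · rw [if_pos hn, if_pos hn]; exact (qmk_out x).symm
      · rw [if_neg hn, if_neg hn]; simp
    rw [h1, S0_unit, qmk_out]
  · -- associativity axiom
    intro a
    have hL : Sbar (fun i => Sbar (a i))
        = qmk (S0 (fun i => S0 (fun j => (a i j).out))) := by
      have := Sbar_mk (fun i => S0 (fun j => (a i j).out))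
      rw [← this]
      refine congrArg _ (funext fun i => ?_)
      rw [← Sbar_mk (fun j => (a i j).out)]
      exact congrArg _ (funext fun j => (qmk_out _).symm)
    have hR : Sbar (fun n => ∑ p ∈ Finset.range (n + 1), a p (n - p))
        = qmk (S0 (fun n => ∑ p ∈ Finset.range (n + 1), (a p (n - p)).out)) := by
      have := Sbar_mk (fun n => ∑ p ∈ Finset.range (n + 1), (a p (n - p)).out)
      rw [← this]
      congr 1
      funext n
      rw [map_sum]
      simp only [qmk_out]
    rw [hL, hR, S0_assoc]
  · -- the intersection of the images of the iterates of ε is not {0}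
    set eps : Lam → Lam := fun x => Sbar (fun m => if m = 1 then x else 0) with heps
    intro hcontra
    have eps_mk : ∀ g : MM, eps (qmk g) = qmk (shiftM g) := by
      intro g
      show Sbar (fun m => if m = 1 then qmk g else 0) = qmk (shiftM g)
      rw [← S0_eps g, ← Sbar_mk]
      congr 1
      funext m
      by_cases hm : m = 1
      · rw [if_pos hm, if_pos hm]
      · rw [if_neg hm, if_neg hm]; simp
    have iter_eps : ∀ (m i n : ℕ), eps^[m] (qmk (eM i n)) = qmk (eM (i + m) n) := by
      intro m
      induction m with
      | zero => intro i n; simp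
      | succ m ih =>
        intro i n
        rw [Function.iterate_succ_apply, eps_mk, shiftM_eM, ih,
          show i + 1 + m = i + (m + 1) from by omega]
    have hmem : qmk (eM 0 0) ∈ ⋂ n : ℕ, Set.range (eps^[n]) := by
      rw [Set.mem_iInter]
      intro n
      refine ⟨qmk (eM 0 n), ?_⟩
      rw [iter_eps n 0 n]
      rw [← sub_eq_zero, ← map_sub, Submodule.mkQ_apply, Submodule.Quotient.mk_eq_zero]
      simpa using rel_mem n
    rw [hcontra] at hmem
    have : eM 0 0 ∈ KK := by
      rw [Set.mem_singleton_iff] at hmem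
      rw [← Submodule.Quotient.mk_eq_zero]
      exact hmem
    exact c_not_mem this
end

section
/- Let T be the real vector space of lower triangular double sequences, let [-1] be the right column shift on T, let Σ̄ : T → ℝ be an ℝ-linear map restricting to the total sum on finitely supported elements of T, and let ε be the endomorphism of Λ = T ⊕ ℝ given by ε(a, r) = (a[-1], Σ̄(a)). Then ⋂_{n∈ℕ} range(ε^n) = {0} × ℝ; in particular this intersection is nonzero and is contained in the kernel of ε. -/
/-!
The first component of `ε x` is the shift of that of `x`, and the shift writes zeros into column
`0`; so the first component of anything in the range of `ε^n` vanishes on columns `< n`, and the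
intersection lies in `{0} × ℝ`. Conversely `(0, r) = ε^(m+1) (r e_{m,0}, 0)`: the single entry
travels along row `m` up to the diagonal, where the next shift kills it, and meanwhile the second
component records `Σ̄ (r e_{m,k}) = r`.
-/

/-- The real vector space `T` of lower triangular double sequences:
functions `a : ℕ × ℕ → ℝ` with `a (i, j) = 0` whenever `j > i`. -/
def LowerTriangular : Submodule ℝ (ℕ × ℕ → ℝ) where
  carrier := {a | ∀ p : ℕ × ℕ, p.1 < p.2 → a p = 0}
  add_mem' := by
    intro a b ha hb p hp
    simp only [Pi.add_apply, ha p hp, hb p hp, add_zero]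
  zero_mem' := by
    intro p _
    rfl
  smul_mem' := by
    intro c a ha p hp
    simp only [Pi.smul_apply, ha p hp, smul_zero]

/-- The right column shift on double sequences:
`(a[-1])_{i j} = a_{i, j-1}` if `1 ≤ j ≤ i` and `0` otherwise. -/
def shiftFun (a : ℕ × ℕ → ℝ) : ℕ × ℕ → ℝ :=
  fun p => if 1 ≤ p.2 ∧ p.2 ≤ p.1 then a (p.1, p.2 - 1) else 0

lemma shiftFun_apply_zero (a : ℕ × ℕ → ℝ) (i : ℕ) : shiftFun a (i, 0) = 0 := by
  simp [shiftFun]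

lemma shiftFun_apply_succ (a : ℕ × ℕ → ℝ) (i j : ℕ) :
    shiftFun a (i, j + 1) = if j < i then a (i, j) else 0 := by
  simp [shiftFun]

lemma shiftFun_iterate_apply_of_lt (a : ℕ × ℕ → ℝ) {n j : ℕ} (i : ℕ) (hj : j < n) :
    shiftFun^[n] a (i, j) = 0 := by
  induction n generalizing j with
  | zero => omega
  | succ n ih =>
    rw [Function.iterate_succ_apply']
    cases j with
    | zero => exact shiftFun_apply_zero _ i
    | succ j => simp only [shiftFun_apply_succ, ih (Nat.lt_of_succ_lt_succ hj), ite_self]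

lemma shiftFun_single_of_lt {i j : ℕ} (h : j < i) (r : ℝ) :
    shiftFun (Pi.single (i, j) r) = Pi.single (i, j + 1) r := by
  ext ⟨k, l⟩
  cases l with
  | zero => rw [shiftFun_apply_zero, Pi.single_apply, if_neg (by simp)]
  | succ l =>
    rw [shiftFun_apply_succ]
    by_cases hkl : (k, l) = (i, j)
    · obtain ⟨rfl, rfl⟩ := Prod.mk.inj hkl
      simp [h]
    · have : (k, l + 1) ≠ (i, j + 1) := by simpa using hkl
      simp [hkl, this]

lemma shiftFun_single_self (i : ℕ) (r : ℝ) : shiftFun (Pi.single (i, i) r) = 0 := by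
  ext ⟨k, l⟩
  cases l with
  | zero => exact shiftFun_apply_zero _ k
  | succ l =>
    rw [shiftFun_apply_succ]
    split_ifs with hlk
    · exact (Pi.single_apply ..).trans (if_neg fun h => by simp only [Prod.mk.injEq] at h; omega)
    · rfl

lemma finsum_single {α M : Type*} [DecidableEq α] [AddCommMonoid M] (a : α) (m : M) :
    ∑ᶠ p, (Pi.single a m : α → M) p = m := by
  rw [finsum_eq_single _ a fun p hp => (Pi.single_apply ..).trans (if_neg hp), Pi.single_eq_same]

namespace LowerTriangular

def single (i j : ℕ) (hji : j ≤ i) (r : ℝ) : LowerTriangular :=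
  ⟨Pi.single (i, j) r, fun p hp =>
    (Pi.single_apply ..).trans (if_neg (by rintro rfl; exact absurd hp hji.not_gt))⟩

lemma finite_support_single (i j : ℕ) (hji : j ≤ i) (r : ℝ) :
    (Function.support (single i j hji r : ℕ × ℕ → ℝ)).Finite :=
  (Set.finite_singleton (i, j)).subset Pi.support_single_subset

end LowerTriangular

open LowerTriangular

section Iterate

variable {f : LowerTriangular × ℝ → LowerTriangular × ℝ}

lemma fst_iterate_eq_shiftFun_iterate (hfst : ∀ x, ((f x).1 : ℕ × ℕ → ℝ) = shiftFun x.1)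
    (n : ℕ) (y : LowerTriangular × ℝ) :
    ((f^[n] y).1 : ℕ × ℕ → ℝ) = shiftFun^[n] y.1 :=
  Function.Semiconj.iterate_right (f := fun x : LowerTriangular × ℝ => (x.1 : ℕ × ℕ → ℝ)) hfst n y

lemma fst_eq_zero_of_forall_mem_range_iterate (hfst : ∀ x, ((f x).1 : ℕ × ℕ → ℝ) = shiftFun x.1)
    {x : LowerTriangular × ℝ} (hx : ∀ n, x ∈ Set.range f^[n]) : x.1 = 0 := by
  ext ⟨i, j⟩
  obtain ⟨y, rfl⟩ := hx (j + 1)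
  rw [fst_iterate_eq_shiftFun_iterate hfst]
  exact shiftFun_iterate_apply_of_lt _ i (Nat.lt_succ_self j)

lemma apply_single_of_lt (hfst : ∀ x, ((f x).1 : ℕ × ℕ → ℝ) = shiftFun x.1)
    (hsnd : ∀ x : LowerTriangular × ℝ,
      (Function.support (x.1 : ℕ × ℕ → ℝ)).Finite → (f x).2 = ∑ᶠ p, (x.1 : ℕ × ℕ → ℝ) p)
    {i j : ℕ} (h : j < i) (r s : ℝ) :
    f (single i j h.le r, s) = (single i (j + 1) h r, r) :=
  Prod.ext (Subtype.ext ((hfst _).trans (shiftFun_single_of_lt h r)))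
    ((hsnd _ (finite_support_single _ _ h.le r)).trans (finsum_single _ r))

lemma apply_single_self (hfst : ∀ x, ((f x).1 : ℕ × ℕ → ℝ) = shiftFun x.1)
    (hsnd : ∀ x : LowerTriangular × ℝ,
      (Function.support (x.1 : ℕ × ℕ → ℝ)).Finite → (f x).2 = ∑ᶠ p, (x.1 : ℕ × ℕ → ℝ) p)
    (i : ℕ) (r s : ℝ) :
    f (single i i le_rfl r, s) = (0, r) :=
  Prod.ext (Subtype.ext ((hfst _).trans (shiftFun_single_self i r)))
    ((hsnd _ (finite_support_single _ _ le_rfl r)).trans (finsum_single _ r))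

lemma iterate_single (hfst : ∀ x, ((f x).1 : ℕ × ℕ → ℝ) = shiftFun x.1)
    (hsnd : ∀ x : LowerTriangular × ℝ,
      (Function.support (x.1 : ℕ × ℕ → ℝ)).Finite → (f x).2 = ∑ᶠ p, (x.1 : ℕ × ℕ → ℝ) p)
    {i k : ℕ} (hk : k ≤ i) (r s : ℝ) :
    f^[k + 1] (single i (i - k) (Nat.sub_le i k) r, s) = (0, r) := by
  induction k generalizing s with
  | zero => exact apply_single_self hfst hsnd i r s
  | succ k ih =>
    have hlt : i - (k + 1) < i := by omega
    have hsucc : i - (k + 1) + 1 = i - k := by omega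
    rw [Function.iterate_succ_apply, apply_single_of_lt hfst hsnd hlt]
    simp only [hsucc]
    exact ih (by omega) r

lemma zero_prod_mem_range_iterate (hfst : ∀ x, ((f x).1 : ℕ × ℕ → ℝ) = shiftFun x.1)
    (hsnd : ∀ x : LowerTriangular × ℝ,
      (Function.support (x.1 : ℕ × ℕ → ℝ)).Finite → (f x).2 = ∑ᶠ p, (x.1 : ℕ × ℕ → ℝ) p)
    (r : ℝ) : ∀ n, ((0 : LowerTriangular), r) ∈ Set.range f^[n]
  | 0 => ⟨_, rfl⟩
  | m + 1 => ⟨_, iterate_single hfst hsnd (i := m) le_rfl r 0⟩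

end Iterate

/-- with `T` the space of lower triangular double sequences,
`[-1]` the right column shift on `T`, `Σ̄ : T → ℝ` a linear extension of the
total sum on finitely supported elements, `Λ = T ⊕ ℝ` and
`ε (a, r) = (a[-1], Σ̄ a)`, one has `⋂ₙ range (ε^n) = {0} × ℝ`; in particular
this intersection is nonzero and contained in the kernel of `ε`. -/
theorem iInter_range_eps_eq_zero_prod_real
    (shift : LowerTriangular →ₗ[ℝ] LowerTriangular)
    (hshift : ∀ a : LowerTriangular,
      ((shift a : ℕ × ℕ → ℝ)) = shiftFun (a : ℕ × ℕ → ℝ))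
    (Sbar : LowerTriangular →ₗ[ℝ] ℝ)
    (hSbar : ∀ a : LowerTriangular,
      (Function.support (a : ℕ × ℕ → ℝ)).Finite →
        Sbar a = ∑ᶠ p : ℕ × ℕ, (a : ℕ × ℕ → ℝ) p)
    (ε : LowerTriangular × ℝ →ₗ[ℝ] LowerTriangular × ℝ)
    (hε : ∀ x : LowerTriangular × ℝ, ε x = (shift x.1, Sbar x.1)) :
    (⋂ n : ℕ, Set.range ((⇑ε)^[n]))
        = {x : LowerTriangular × ℝ | x.1 = 0} ∧
    (⋂ n : ℕ, Set.range ((⇑ε)^[n])) ≠ ({0} : Set (LowerTriangular × ℝ)) ∧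
    (⋂ n : ℕ, Set.range ((⇑ε)^[n])) ⊆ {x : LowerTriangular × ℝ | ε x = 0} := by
  have hfst : ∀ x, ((ε x).1 : ℕ × ℕ → ℝ) = shiftFun x.1 := fun x => by rw [hε, hshift]
  have hsnd : ∀ x : LowerTriangular × ℝ, (Function.support (x.1 : ℕ × ℕ → ℝ)).Finite →
      (ε x).2 = ∑ᶠ p, (x.1 : ℕ × ℕ → ℝ) p := fun x hx => by rw [hε, hSbar _ hx]
  have key : (⋂ n : ℕ, Set.range ((⇑ε)^[n])) = {x : LowerTriangular × ℝ | x.1 = 0} := by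
    refine Set.Subset.antisymm (fun x hx => ?_) ?_
    · exact fst_eq_zero_of_forall_mem_range_iterate hfst (Set.mem_iInter.1 hx)
    · rintro ⟨a, r⟩ (rfl : a = 0)
      exact Set.mem_iInter.2 (zero_prod_mem_range_iterate hfst hsnd r)
  refine ⟨key, fun h => ?_, ?_⟩
  · have : ((0 : LowerTriangular), (1 : ℝ)) ∈ ({0} : Set (LowerTriangular × ℝ)) := by
      rw [← h, key]; rfl
    exact one_ne_zero (Prod.ext_iff.1 this).2
  · rw [key]
    rintro ⟨a, r⟩ (rfl : a = 0)
    simp [hε]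
end

section
/- Let K be a field, let V and W be K-vector spaces, and let Y : ℕ → Submodule_K(W) be a decreasing sequence of subspaces of W (Y_{n+1} ⊆ Y_n for all n). Then tensoring with V commutes with the countable intersection: inside V ⊗_K W, the image of V ⊗_K (⋂_{n∈ℕ} Y_n) (that is, the range of the map V ⊗ (⋂ Y_n) → V ⊗ W induced by the inclusion) equals the intersection ⋂_{n∈ℕ} of the images of V ⊗_K Y_n in V ⊗_K W. -/
open TensorProduct

section aux

variable {K : Type*} [Field K] {V W : Type*} [AddCommGroup V] [Module K V]
  [AddCommGroup W] [Module K W] {ι : Type*} [DecidableEq ι]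

/-- Coordinate description of `V ⊗ W` with respect to a basis of `V`. -/
noncomputable def tensorCoordEquiv (b : Module.Basis ι K V) :
    V ⊗[K] W ≃ₗ[K] ι →₀ W :=
  (TensorProduct.congr b.repr (LinearEquiv.refl K W)).trans
    (TensorProduct.finsuppScalarLeft K W ι)

@[simp] lemma tensorCoordEquiv_tmul_apply (b : Module.Basis ι K V) (v : V) (w : W) (i : ι) :
    tensorCoordEquiv b (v ⊗ₜ[K] w) i = b.repr v i • w := by
  simp [tensorCoordEquiv]

lemma tensorCoordEquiv_symm_single (b : Module.Basis ι K V) (i : ι) (w : W) :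
    (tensorCoordEquiv b).symm (Finsupp.single i w) = b i ⊗ₜ[K] w := by
  simp [tensorCoordEquiv, LinearEquiv.trans_symm, LinearEquiv.symm_apply_eq]

lemma range_lTensor_subtype_eq (b : Module.Basis ι K V) (p : Submodule K W) :
    LinearMap.range (LinearMap.lTensor V p.subtype)
      = ⨅ i : ι, Submodule.comap
          ((Finsupp.lapply i) ∘ₗ (tensorCoordEquiv b).toLinearMap) p := by
  apply le_antisymm
  · rintro _ ⟨y, rfl⟩
    refine Submodule.mem_iInf _ |>.2 fun i => ?_
    induction y with
    | zero => simp
    | tmul v w =>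
        simpa using Submodule.smul_mem p _ w.2
    | add y₁ y₂ h₁ h₂ =>
        simpa using Submodule.add_mem p h₁ h₂
  · intro x hx
    rw [Submodule.mem_iInf] at hx
    have hrepr : x = (tensorCoordEquiv b).symm (tensorCoordEquiv b x) := by simp
    rw [hrepr]
    set f := tensorCoordEquiv b x with hf
    have : f = f.sum fun i w => Finsupp.single i w := (Finsupp.sum_single f).symm
    rw [this, map_finsuppSum]
    apply Submodule.sum_mem
    intro i hi
    show (tensorCoordEquiv b).symm (Finsupp.single i (f i)) ∈ _
    rw [tensorCoordEquiv_symm_single]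
    exact ⟨b i ⊗ₜ ⟨f i, hx i⟩, rfl⟩

end aux

/-- over a field `K`, tensoring with `V` commutes with a
countable decreasing intersection of subspaces `Yₙ ≤ W`: inside `V ⊗ W`,
the image of `V ⊗ (⋂ₙ Yₙ)` equals the intersection of the images of the
`V ⊗ Yₙ`. -/
theorem range_lTensor_iInf_eq_iInf_range_lTensor
    (K : Type*) [Field K]
    (V W : Type*) [AddCommGroup V] [Module K V] [AddCommGroup W] [Module K W]
    (Y : ℕ → Submodule K W) (hY : ∀ n : ℕ, Y (n + 1) ≤ Y n) :
    LinearMap.range (LinearMap.lTensor V (⨅ n : ℕ, Y n).subtype)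
      = ⨅ n : ℕ, LinearMap.range (LinearMap.lTensor V (Y n).subtype) := by
  classical
  let b := Module.Basis.ofVectorSpace K V
  simp only [range_lTensor_subtype_eq b, Submodule.comap_iInf]
  exact iInf_comm
end

section
/- Let K be a field, let ι be an index type, let (A_i)_{i∈ι} be a family of K-vector spaces and let B be a K-vector space. The canonical K-linear map (∏_{i∈ι} A_i) ⊗_K B → ∏_{i∈ι} (A_i ⊗_K B), sending (a_i)_i ⊗ b to (a_i ⊗ b)_i, is injective. -/
open TensorProduct

/-
A free module `B` with basis indexed by `J` turns `M ⊗ B` into `J →₀ M`, naturally in `M`.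
Under this identification the map becomes `(J →₀ ∏ᵢ Aᵢ) → ∏ᵢ (J →₀ Aᵢ)`, applying each
projection coordinatewise, which is visibly injective.
-/

namespace TensorProduct

variable {R M M' N κ : Type*} [CommSemiring R] [DecidableEq κ]
  [AddCommMonoid M] [Module R M] [AddCommMonoid M'] [Module R M']
  [AddCommMonoid N] [Module R N]

theorem equivFinsuppOfBasisRight_rTensor_apply (𝒞 : Module.Basis κ R N) (f : M →ₗ[R] M')
    (x : M ⊗[R] N) (k : κ) :
    equivFinsuppOfBasisRight 𝒞 (f.rTensor N x) k = f (equivFinsuppOfBasisRight 𝒞 x k) := by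
  induction x using TensorProduct.induction_on with
  | zero => simp
  | tmul m n => simp
  | add x y hx hy => simp [hx, hy]

theorem pi_rTensor_proj_injective {ι : Type*} (A : ι → Type*) [∀ i, AddCommMonoid (A i)]
    [∀ i, Module R (A i)] (B : Type*) [AddCommMonoid B] [Module R B] [Module.Free R B] :
    Function.Injective (LinearMap.pi fun i => (LinearMap.proj (R := R) (φ := A) i).rTensor B) := by
  classical
  intro x y hxy
  apply (equivFinsuppOfBasisRight (Module.Free.chooseBasis R B)).injective
  ext k i
  have hi : (LinearMap.proj (R := R) (φ := A) i).rTensor B x = (LinearMap.proj i).rTensor B y :=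
    congrFun hxy i
  simpa only [equivFinsuppOfBasisRight_rTensor_apply, LinearMap.proj_apply] using
    congrArg (equivFinsuppOfBasisRight (Module.Free.chooseBasis R B) · k) hi

end TensorProduct

/-- over a field `K`, the canonical map
`(∏ᵢ Aᵢ) ⊗ B → ∏ᵢ (Aᵢ ⊗ B)`, sending `(aᵢ)ᵢ ⊗ b` to `(aᵢ ⊗ b)ᵢ`,
is injective. -/
theorem pi_tensor_to_tensor_pi_injective_of_field
    (K : Type*) [Field K]
    (ι : Type*) (A : ι → Type*)
    [∀ i, AddCommGroup (A i)] [∀ i, Module K (A i)]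
    (B : Type*) [AddCommGroup B] [Module K B] :
    Function.Injective
      ((LinearMap.pi fun i =>
          TensorProduct.map (LinearMap.proj i) LinearMap.id) :
        ((∀ i, A i) ⊗[K] B) →ₗ[K] ∀ i, A i ⊗[K] B) :=
  TensorProduct.pi_rTensor_proj_injective A B
end
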